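/- arXiv:2303.16451 — 2 statements merged into one kernel-verified Lean document; each statement's English description precedes it below -/
import Mathlib

section
/- For every ω_D ∈ ℝ with ω_D ≠ 0 and every t ∈ ℝ, the Heisenberg evolution of the total x-spin operator under the dipolar Hamiltonian is harmonic with frequency 3ω_D: exp(−i t H_D) · Ix · exp(i t H_D) = cos(3 ω_D t) · Ix − (i/(3 ω_D)) sin(3 ω_D t) · [H_D, Ix], where H_D = (ω_D/2)(2 σz⊗σz − σx⊗σx − σy⊗σy) and Ix = (1/2)(σx⊗I₂ + I₂⊗σx). -/
open Matrix Complex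
open scoped Kronecker

noncomputable def σx : Matrix (Fin 2) (Fin 2) ℂ := !![0, 1; 1, 0]
noncomputable def σy : Matrix (Fin 2) (Fin 2) ℂ := !![0, -Complex.I; Complex.I, 0]
noncomputable def σz : Matrix (Fin 2) (Fin 2) ℂ := !![1, 0; 0, -1]

/-- The dipolar Hamiltonian H_D = (ω_D/2)(2 σz⊗σz − σx⊗σx − σy⊗σy). -/
noncomputable def HD (ω_D : ℝ) : Matrix (Fin 2 × Fin 2) (Fin 2 × Fin 2) ℂ :=
  ((ω_D : ℂ) / 2) • ((2 : ℂ) • (σz ⊗ₖ σz) - σx ⊗ₖ σx - σy ⊗ₖ σy)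

/-- The total x-spin operator Ix = (1/2)(σx⊗I₂ + I₂⊗σx). -/
noncomputable def Ix : Matrix (Fin 2 × Fin 2) (Fin 2 × Fin 2) ℂ :=
  (1 / 2 : ℂ) • (σx ⊗ₖ (1 : Matrix (Fin 2) (Fin 2) ℂ) + (1 : Matrix (Fin 2) (Fin 2) ℂ) ⊗ₖ σx)

/-!
Writing `C = [H_D, Ix]`, a Pauli computation gives `[H_D, C] = (3 ω_D)² Ix`, so `Ix` and `C` span
a plane invariant under `ad H_D`. In any complex Banach algebra, if `[H, A] = C` and
`[H, C] = μ² A` with `μ ≠ 0`, then `exp(-zH) A exp(zH) = cosh(μz) A - (sinh(μz)/μ) C`: conjugating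
the right-hand side back by `exp(zH)` gives a function of `z` with zero derivative whose value at
`z = 0` is `A`. Taking `z = i t` turns `cosh` and `sinh` into `cos` and `i sin`.
-/

section BanachAlgebra

variable {𝔸 : Type*} [NormedRing 𝔸] [NormedAlgebra ℂ 𝔸] [CompleteSpace 𝔸]

lemma exp_neg_smul_mul_exp_smul (H : 𝔸) (z : ℂ) :
    NormedSpace.exp (-z • H) * NormedSpace.exp (z • H) = 1 := by
  let +nondep : NormedAlgebra ℚ 𝔸 := .restrictScalars ℚ ℂ 𝔸
  rw [← NormedSpace.exp_add_of_commute ((Commute.refl H).smul_left _ |>.smul_right _), neg_smul,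
    neg_add_cancel, NormedSpace.exp_zero]

lemma hasDerivAt_exp_smul_mul_mul_exp_neg_smul {H : 𝔸} {R : ℂ → 𝔸} {R' : 𝔸} {z : ℂ}
    (hR : HasDerivAt R R' z) :
    HasDerivAt (fun z => NormedSpace.exp (z • H) * R z * NormedSpace.exp (-z • H))
      (NormedSpace.exp (z • H) * (H * R z - R z * H + R') * NormedSpace.exp (-z • H)) z := by
  have hE := hasDerivAt_exp_smul_const (𝕂 := ℂ) H z
  have hE' := hasDerivAt_exp_smul_const' (𝕂 := ℂ) (-H) z
  simp only [smul_neg, ← neg_smul] at hE'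
  convert (hE.fun_mul hR).fun_mul hE' using 1
  noncomm_ring

theorem exp_neg_smul_mul_mul_exp_smul_of_commutator {H A C : 𝔸} {μ : ℂ} (hμ : μ ≠ 0)
    (hA : H * A - A * H = C) (hC : H * C - C * H = μ ^ 2 • A) (z : ℂ) :
    NormedSpace.exp (-z • H) * A * NormedSpace.exp (z • H) =
      Complex.cosh (μ * z) • A - (Complex.sinh (μ * z) / μ) • C := by
  set R : ℂ → 𝔸 := fun z => Complex.cosh (μ * z) • A - (Complex.sinh (μ * z) / μ) • C
  have hR : ∀ z, HasDerivAt R (R z * H - H * R z) z := by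
    intro z
    have hmul : HasDerivAt (μ * ·) μ z := by simpa using (hasDerivAt_id' z).const_mul μ
    refine ((hmul.ccosh.smul_const A).fun_sub
      ((hmul.csinh.div_const μ).smul_const C)).congr_deriv ?_
    calc (Complex.sinh (μ * z) * μ) • A - (Complex.cosh (μ * z) * μ / μ) • C
        = (Complex.sinh (μ * z) / μ) • (H * C - C * H) -
            Complex.cosh (μ * z) • (H * A - A * H) := by
          rw [hA, hC, smul_smul]
          congr 2 <;> field_simp
      _ = R z * H - H * R z := by
          simp only [R, smul_sub, sub_mul, mul_sub, smul_mul_assoc, mul_smul_comm]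
          abel
  have hconj : ∀ z, HasDerivAt
      (fun z => NormedSpace.exp (z • H) * R z * NormedSpace.exp (-z • H)) 0 z := fun z => by
    simpa using hasDerivAt_exp_smul_mul_mul_exp_neg_smul (H := H) (hR z)
  have hconst : NormedSpace.exp (z • H) * R z * NormedSpace.exp (-z • H) = A := by
    simpa [R] using is_const_of_deriv_eq_zero
      (fun z => (hconj z).differentiableAt) (fun z => (hconj z).deriv) z 0
  nth_rw 1 [← hconst]
  simp only [← mul_assoc, exp_neg_smul_mul_exp_smul, one_mul]
  rw [mul_assoc, exp_neg_smul_mul_exp_smul, mul_one]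

end BanachAlgebra

noncomputable def σyz : Matrix (Fin 2 × Fin 2) (Fin 2 × Fin 2) ℂ := σy ⊗ₖ σz + σz ⊗ₖ σy

lemma HD_mul_Ix_sub_Ix_mul_HD (ω : ℝ) :
    HD ω * Ix - Ix * HD ω = (3 * ω * I / 2 : ℂ) • σyz := by
  ext ⟨a, b⟩ ⟨c, d⟩
  fin_cases a <;> fin_cases b <;> fin_cases c <;> fin_cases d <;>
    simp [HD, Ix, σyz, σx, σy, σz, Matrix.mul_apply, Fintype.sum_prod_type, Fin.sum_univ_two,
      one_apply] <;> ring_nf <;> rw [I_sq] <;> ring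

lemma HD_mul_σyz_sub_σyz_mul_HD (ω : ℝ) :
    HD ω * σyz - σyz * HD ω = (-6 * ω * I : ℂ) • Ix := by
  ext ⟨a, b⟩ ⟨c, d⟩
  fin_cases a <;> fin_cases b <;> fin_cases c <;> fin_cases d <;>
    simp [HD, Ix, σyz, σx, σy, σz, Matrix.mul_apply, Fintype.sum_prod_type, Fin.sum_univ_two,
      one_apply] <;> ring_nf

lemma HD_mul_commutator_sub_commutator_mul_HD (ω : ℝ) :
    HD ω * (HD ω * Ix - Ix * HD ω) - (HD ω * Ix - Ix * HD ω) * HD ω = (3 * ω : ℂ) ^ 2 • Ix := by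
  rw [HD_mul_Ix_sub_Ix_mul_HD, mul_smul_comm, smul_mul_assoc, ← smul_sub,
    HD_mul_σyz_sub_σyz_mul_HD, smul_smul]
  congr 1
  ring_nf
  rw [I_sq]
  ring

/-- Heisenberg evolution of Ix under H_D:
exp(−i t H_D) · Ix · exp(i t H_D)
  = cos(3 ω_D t) · Ix − (i/(3 ω_D)) sin(3 ω_D t) · [H_D, Ix]. -/
theorem heisenberg_evolution_Ix (ω_D t : ℝ) (hω : ω_D ≠ 0) :
    NormedSpace.exp ((-(Complex.I * (t : ℂ))) • HD ω_D) * Ix *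
        NormedSpace.exp ((Complex.I * (t : ℂ)) • HD ω_D) =
      ((Real.cos (3 * ω_D * t) : ℂ)) • Ix -
        (Complex.I / (3 * (ω_D : ℂ)) * (Real.sin (3 * ω_D * t) : ℂ)) •
          (HD ω_D * Ix - Ix * HD ω_D) := by
  have h3ω : (3 * ω_D : ℂ) ≠ 0 := by exact_mod_cast mul_ne_zero three_ne_zero hω
  -- `NormedSpace.exp` only sees the topology, so any Banach-algebra norm on matrices will do.
  open scoped Matrix.Norms.Operator in
  refine (exp_neg_smul_mul_mul_exp_smul_of_commutator h3ω rfl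
    (HD_mul_commutator_sub_commutator_mul_HD ω_D) (I * t)).trans ?_
  rw [show (3 * ω_D : ℂ) * (I * t) = (3 * ω_D * t : ℝ) * I by push_cast; ring,
    Complex.cosh_mul_I, Complex.sinh_mul_I, ← ofReal_cos, ← ofReal_sin]
  congr 2
  ring
end

section
/- Let A_L ≥ A_S > 0 and T_L ≥ T_S > 0, and for t ≥ 0 define x_Q(t) = A_L e^{−t/T_L} + A_S e^{−t/T_S} and x_0(t) = √(A_L A_S)·(e^{−t/T_L} − e^{−t/T_S}), and set c_z(t) = x_Q(t)/√2 + x_0(t) and c_xy(t) = x_0(t) − x_Q(t)/(2√2). Then for all t ≥ 0 one has c_xy(t)² < c_z(t)²/2; consequently, for all θ ∈ ℝ and all a_z ∈ ℝ, the quantity f(θ) = 1 − c_xy(t)² sin²θ − (1/4)(a_z + c_z(t) cos θ)² − (1/4)(a_z − c_z(t) cos θ)² satisfies f(θ) ≥ f(0), so the optimal measurement direction in the relaxation regime is θ = 0, i.e. σz. -/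
set_option maxHeartbeats 1000000 in
/-- In the relaxation regime, with x_Q(t) = A_L e^{−t/T_L} + A_S e^{−t/T_S},
x_0(t) = √(A_L A_S)(e^{−t/T_L} − e^{−t/T_S}), c_z = x_Q/√2 + x_0 and
c_xy = x_0 − x_Q/(2√2), one has c_xy(t)² < c_z(t)²/2 for all t ≥ 0; consequently
the (second-order) conditional entropy
f(θ) = 1 − c_xy² sin²θ − (1/4)(a_z + c_z cos θ)² − (1/4)(a_z − c_z cos θ)²
satisfies f(θ) ≥ f(0) for all θ and a_z, i.e. the optimal measurement is σz. -/
theorem relaxation_optimal_measurement_z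
    (A_L A_S T_L T_S : ℝ) (hA : A_L ≥ A_S) (hAS : 0 < A_S)
    (hT : T_L ≥ T_S) (hTS : 0 < T_S)
    (xQ x0 cz cxy : ℝ → ℝ)
    (hxQ : ∀ t, xQ t = A_L * Real.exp (-t / T_L) + A_S * Real.exp (-t / T_S))
    (hx0 : ∀ t, x0 t = Real.sqrt (A_L * A_S) * (Real.exp (-t / T_L) - Real.exp (-t / T_S)))
    (hcz : ∀ t, cz t = xQ t / Real.sqrt 2 + x0 t)
    (hcxy : ∀ t, cxy t = x0 t - xQ t / (2 * Real.sqrt 2)) :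
    ∀ t, 0 ≤ t →
      (cxy t) ^ 2 < (cz t) ^ 2 / 2 ∧
      ∀ a_z θ : ℝ,
        1 - (cxy t) ^ 2 * Real.sin 0 ^ 2 - (1 / 4) * (a_z + cz t * Real.cos 0) ^ 2 -
            (1 / 4) * (a_z - cz t * Real.cos 0) ^ 2 ≤
          1 - (cxy t) ^ 2 * Real.sin θ ^ 2 - (1 / 4) * (a_z + cz t * Real.cos θ) ^ 2 -
            (1 / 4) * (a_z - cz t * Real.cos θ) ^ 2 := by
  intro t ht
  have hTL : 0 < T_L := lt_of_lt_of_le hTS hT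
  have hAL : 0 < A_L := lt_of_lt_of_le hAS hA
  set u := Real.exp (-t / T_L) with hu
  set v := Real.exp (-t / T_S) with hv
  have hv0 : 0 < v := Real.exp_pos _
  have hu0 : 0 < u := Real.exp_pos _
  have huv : v ≤ u := by
    apply Real.exp_le_exp.mpr
    rw [neg_div, neg_div, neg_le_neg_iff]
    exact div_le_div_of_nonneg_left ht hTS hT
  -- sqrt bound
  have hsAS : Real.sqrt (A_L * A_S) ≤ A_L := by
    calc Real.sqrt (A_L * A_S) ≤ Real.sqrt (A_L * A_L) :=
          Real.sqrt_le_sqrt (by nlinarith)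
      _ = A_L := Real.sqrt_mul_self hAL.le
  have hsnn : 0 ≤ Real.sqrt (A_L * A_S) := Real.sqrt_nonneg _
  have hq : 0 < xQ t := by rw [hxQ]; positivity
  have hz0 : 0 ≤ x0 t := by
    rw [hx0]; exact mul_nonneg hsnn (by linarith)
  have hzq : x0 t ≤ xQ t := by
    rw [hx0, hxQ]
    nlinarith [mul_le_mul_of_nonneg_right hsAS hu0.le, mul_nonneg hsnn hv0.le,
      mul_pos hAS hv0]
  set S := Real.sqrt 2 with hSdef
  have hS2 : S * S = 2 := Real.mul_self_sqrt (by norm_num)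
  have hS1 : 1 ≤ S := by nlinarith [Real.sqrt_nonneg 2]
  have hS0 : 0 < S := by linarith
  have hqS : xQ t / S = xQ t * S / 2 := by
    field_simp
    nlinarith [hS2]
  have hqS' : xQ t / (2 * S) = xQ t * S / 4 := by
    field_simp
    nlinarith [hS2]
  have h1 : 0 ≤ x0 t * (xQ t * S - x0 t) := by
    apply mul_nonneg hz0
    nlinarith [hq, hzq, hS1]
  have key : (cxy t) ^ 2 < (cz t) ^ 2 / 2 := by
    rw [hcz, hcxy, hqS, hqS']
    nlinarith [hS2, h1, mul_pos hq hq]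
  refine ⟨key, ?_⟩
  intro a_z θ
  have hsc := Real.sin_sq_add_cos_sq θ
  have hdiff : 0 ≤ ((cz t) ^ 2 / 2 - (cxy t) ^ 2) * Real.sin θ ^ 2 :=
    mul_nonneg (by linarith) (sq_nonneg _)
  have h2 : (cz t) ^ 2 * (Real.sin θ ^ 2 + Real.cos θ ^ 2) = (cz t) ^ 2 := by
    rw [hsc]; ring
  simp only [Real.sin_zero, Real.cos_zero]
  nlinarith [hdiff, h2]
end
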